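/- arXiv:1601.06893 — 5 statements merged into one kernel-verified Lean document; each statement's English description precedes it below -/
import Mathlib

section
/- If X ⊆ ℝⁿ is closed, convex, ray-like, and does not contain the origin, then the antipolar of the antipolar of X equals X, i.e., X'' = X. -/
open scoped RealInnerProductSpace

/-- The antipolar of a set X ⊆ ℝⁿ: X' = {y : ⟨x,y⟩ ≥ 1 for all x ∈ X}. -/
def antipolar {n : ℕ} (X : Set (EuclideanSpace ℝ (Fin n))) : Set (EuclideanSpace ℝ (Fin n)) :=
  {y | ∀ x ∈ X, 1 ≤ (⟪x, y⟫ : ℝ)}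

/-!
For `z ∉ X` we need a `y ∈ X'` with `⟪z, y⟫ < 1`. Separate `z` from `X` by a functional `f`,
`f z < u < f x` on `X`. A ray-like set is stable under `x ↦ (1 + θ) • x`, so a linear functional
bounded below on `X` is nonnegative there. If `u > 0`, then `u⁻¹ f` works. Otherwise `f z < 0`;
separating `0` from `X` gives some `g ≥ 1` on `X`, and `g + t f` works for `t` large.
-/

section RayLike

variable {E F : Type*} [AddCommGroup E] [Module ℝ E] [FunLike F E ℝ] [LinearMapClass F ℝ E ℝ]

theorem nonneg_of_rayLike_of_forall_lt {X : Set E}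
    (hray : ∀ x ∈ X, ∀ y ∈ X, ∀ θ : ℝ, 0 ≤ θ → x + θ • y ∈ X)
    (f : F) {u : ℝ} (hu : ∀ x ∈ X, u < f x) {x : E} (hx : x ∈ X) : 0 ≤ f x := by
  by_contra! hneg
  have hscaled := hu _ (hray x hx x hx |u / f x| (abs_nonneg _))
  rw [map_add, map_smul, smul_eq_mul] at hscaled
  have hle_abs : u / f x ≤ |u / f x| := le_abs_self _
  have hcancel : u / f x * f x = u := div_mul_cancel₀ u hneg.ne
  nlinarith

end RayLike

section Separation

variable {E : Type*} [TopologicalSpace E] [AddCommGroup E] [IsTopologicalAddGroup E]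
  [Module ℝ E] [ContinuousSMul ℝ E] [LocallyConvexSpace ℝ E] {X : Set E}

theorem exists_strongDual_one_le_of_zero_notMem (hclosed : IsClosed X) (hconv : Convex ℝ X)
    (h0 : (0 : E) ∉ X) : ∃ g : StrongDual ℝ E, ∀ x ∈ X, 1 ≤ g x := by
  obtain ⟨g, d, hg0, hgX⟩ := geometric_hahn_banach_point_closed hconv hclosed h0
  rw [map_zero] at hg0
  refine ⟨d⁻¹ • g, fun x hx => ?_⟩
  rw [smul_apply, smul_eq_mul, le_inv_mul_iff₀ hg0, mul_one]
  exact (hgX x hx).le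

theorem exists_strongDual_one_le_of_notMem (hclosed : IsClosed X) (hconv : Convex ℝ X)
    (hray : ∀ x ∈ X, ∀ y ∈ X, ∀ θ : ℝ, 0 ≤ θ → x + θ • y ∈ X)
    (h0 : (0 : E) ∉ X) {z : E} (hz : z ∉ X) :
    ∃ f : StrongDual ℝ E, (∀ x ∈ X, 1 ≤ f x) ∧ f z < 1 := by
  obtain ⟨f, u, hfz, hfX⟩ := geometric_hahn_banach_point_closed hconv hclosed hz
  rcases lt_or_ge 0 u with hu | hu
  · refine ⟨u⁻¹ • f, fun x hx => ?_, ?_⟩ <;>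
      simp only [smul_apply, smul_eq_mul]
    · exact (le_inv_mul_iff₀ hu).2 ((mul_one u).trans_le (hfX x hx).le)
    · exact (inv_mul_lt_iff₀ hu).2 (hfz.trans_eq (mul_one u).symm)
  · have hfz_neg : f z < 0 := hfz.trans_le hu
    have hf_nonneg : ∀ x ∈ X, 0 ≤ f x := fun x => nonneg_of_rayLike_of_forall_lt hray f hfX
    obtain ⟨g, hgX⟩ := exists_strongDual_one_le_of_zero_notMem hclosed hconv h0
    -- `t := |g z| / (-f z)` makes `(g + t • f) z = g z - |g z| ≤ 0`.
    set t := |g z| / -f z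
    have ht : 0 ≤ t := div_nonneg (abs_nonneg _) (by linarith)
    have htz : t * f z = -|g z| := by
      simp only [t]
      field_simp [hfz_neg.ne]
    refine ⟨g + t • f, fun x hx => ?_, ?_⟩ <;>
      simp only [add_apply, smul_apply, smul_eq_mul]
    · nlinarith [hgX x hx, hf_nonneg x hx]
    · linarith [le_abs_self (g z)]

end Separation

theorem subset_antipolar_antipolar {n : ℕ} (X : Set (EuclideanSpace ℝ (Fin n))) :
    X ⊆ antipolar (antipolar X) :=
  fun x hx _ hy => real_inner_comm x _ ▸ hy x hx

theorem antipolar_antipolar {n : ℕ} (X : Set (EuclideanSpace ℝ (Fin n)))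
    (hclosed : IsClosed X) (hconv : Convex ℝ X)
    (hray : ∀ x ∈ X, ∀ y ∈ X, ∀ θ : ℝ, 0 ≤ θ → x + θ • y ∈ X)
    (h0 : (0 : EuclideanSpace ℝ (Fin n)) ∉ X) :
    antipolar (antipolar X) = X := by
  refine Set.Subset.antisymm ?_ (subset_antipolar_antipolar X)
  intro z hz
  by_contra hzX
  obtain ⟨f, hfX, hfz⟩ := exists_strongDual_one_le_of_notMem hclosed hconv hray h0 hzX
  set y := (InnerProductSpace.toDual ℝ _).symm f
  have hy (x) : ⟪y, x⟫ = f x := InnerProductSpace.toDual_symm_apply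
  have hy_mem : y ∈ antipolar X := fun x hx => real_inner_comm x y ▸ hy x ▸ hfX x hx
  exact (hz y hy_mem).not_gt (hy z ▸ hfz)
end

section
/- Von Neumann's trace inequality: for any real m×n matrices X and Y, ⟨X,Y⟩ = trace(XᵀY) ≤ ⟨σ(X), σ(Y)⟩, where σ(·) is the vector of singular values in nonincreasing order. -/
open Matrix

/-- The m×n rectangular "diagonal" matrix with entries `s 0, s 1, …` on the diagonal. -/
def svdDiagMat (m n : ℕ) (s : ℕ → ℝ) : Matrix (Fin m) (Fin n) ℝ :=
  Matrix.of fun i j => if (i : ℕ) = (j : ℕ) then s (i : ℕ) else 0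

/-- `s` lists the singular values of `X` in nonincreasing order (padded by zeros from index
`min m n` on), as witnessed by a singular value decomposition `X = U D Vᵀ` with `U, V`
orthonormal. -/
def IsOrderedSVD {m n : ℕ} (X : Matrix (Fin m) (Fin n) ℝ) (s : ℕ → ℝ) : Prop :=
  Antitone s ∧ (∀ i, 0 ≤ s i) ∧ (∀ i, min m n ≤ i → s i = 0) ∧
  ∃ (U : Matrix (Fin m) (Fin m) ℝ) (V : Matrix (Fin n) (Fin n) ℝ),
    U * Uᵀ = 1 ∧ V * Vᵀ = 1 ∧ X = U * svdDiagMat m n s * Vᵀ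

/-- The trace inner product ⟨X,Y⟩ = trace(XᵀY) on m×n real matrices. -/
def matInner {m n : ℕ} (X Y : Matrix (Fin m) (Fin n) ℝ) : ℝ :=
  Matrix.trace (Xᵀ * Y)

/-- The nuclear norm: the sum of the singular values. -/
noncomputable def nuclearNorm {m n : ℕ} (X : Matrix (Fin m) (Fin n) ℝ) : ℝ :=
  sSup {t : ℝ | ∃ s : ℕ → ℝ, IsOrderedSVD X s ∧ t = ∑ i ∈ Finset.range (min m n), s i}

/-- The entrywise ℓ₁ norm ‖Y‖₁ = Σ|Y_{ij}|. -/
def l1Norm {m n : ℕ} (Y : Matrix (Fin m) (Fin n) ℝ) : ℝ :=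
  ∑ i, ∑ j, |Y i j|

/-- The max norm ‖Z‖_∞ = max_{ij}|Z_{ij}|. -/
noncomputable def maxNorm {m n : ℕ} (Z : Matrix (Fin m) (Fin n) ℝ) : ℝ :=
  ⨆ i, ⨆ j, |Z i j|

/-- The spectral norm ‖Z‖₂ = σ_max(Z), as the ℓ₂ operator norm. -/
noncomputable def matSpectralNorm {m n : ℕ} (Z : Matrix (Fin m) (Fin n) ℝ) : ℝ :=
  ‖LinearMap.toContinuousLinearMap (Matrix.toEuclideanLin Z)‖

/-!
Write `X = ∑ₖ σₖ uₖ vₖᵀ` and `Y = ∑ₗ τₗ pₗ qₗᵀ` with orthonormal `uₖ, vₖ, pₗ, qₗ`. Then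
`⟨X, Y⟩ = ∑ₖₗ σₖ τₗ ⟨uₖ, pₗ⟩ ⟨vₖ, qₗ⟩`, and by AM–GM each overlap product is at most
`Wₖₗ = (⟨uₖ, pₗ⟩² + ⟨vₖ, qₗ⟩²) / 2`. By Bessel's inequality `W` has row and column sums at most `1`,
and for such a doubly substochastic `W` and nonincreasing nonnegative `σ, τ`, two summations by
parts give `∑ₖₗ σₖ τₗ Wₖₗ ≤ ∑ₖ σₖ τₖ`.
-/

open Finset

section SummationByParts

variable {R : Type*} [CommRing R] [LinearOrder R] [IsStrictOrderedRing R]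

theorem Antitone.sum_range_mul_le_sum_range_mul {s x y : ℕ → R} {N : ℕ} (hs : Antitone s)
    (hs₀ : ∀ k, 0 ≤ s k) (h : ∀ K ≤ N, ∑ k ∈ range K, x k ≤ ∑ k ∈ range K, y k) :
    ∑ k ∈ range N, s k * x k ≤ ∑ k ∈ range N, s k * y k := by
  have hZ : ∀ K ≤ N, ∑ k ∈ range K, (x k - y k) ≤ 0 := fun K hK => by
    rw [sum_sub_distrib]; exact sub_nonpos.mpr (h K hK)
  suffices ∑ k ∈ range N, s k • (x k - y k) ≤ 0 by
    simpa only [smul_eq_mul, mul_sub, sum_sub_distrib, sub_nonpos] using this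
  rw [sum_range_by_parts]
  refine sub_nonpos_of_le ((smul_nonpos_of_nonneg_of_nonpos (hs₀ _) (hZ N le_rfl)).trans ?_)
  refine sum_nonneg fun i hi => smul_nonneg_of_nonpos_of_nonpos ?_ (hZ _ ?_)
  · exact sub_nonpos.mpr (hs i.le_succ)
  · have := mem_range.mp hi; omega

theorem sum_range_sum_range_le_min {W : ℕ → ℕ → R} {N : ℕ} (hW : ∀ k l, 0 ≤ W k l)
    (hrow : ∀ k < N, ∑ l ∈ range N, W k l ≤ 1) (hcol : ∀ l < N, ∑ k ∈ range N, W k l ≤ 1)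
    {K L : ℕ} (hK : K ≤ N) (hL : L ≤ N) :
    ∑ k ∈ range K, ∑ l ∈ range L, W k l ≤ min K L := by
  have partial_le {a b : ℕ} (hab : a ≤ b) (f : ℕ → R) (hf : ∀ i, 0 ≤ f i) :
      ∑ i ∈ range a, f i ≤ ∑ i ∈ range b, f i :=
    sum_le_sum_of_subset_of_nonneg (range_subset_range.mpr hab) fun i _ _ => hf i
  rw [Nat.cast_min]
  refine le_min ?_ ?_
  · calc ∑ k ∈ range K, ∑ l ∈ range L, W k l ≤ ∑ k ∈ range K, 1 := by
          refine sum_le_sum fun k hk => (partial_le hL _ (hW k)).trans (hrow k ?_)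
          exact (mem_range.mp hk).trans_le hK
      _ = K := by simp
  · rw [sum_comm]
    calc ∑ l ∈ range L, ∑ k ∈ range K, W k l ≤ ∑ l ∈ range L, 1 := by
          refine sum_le_sum fun l hl => (partial_le hK _ (hW · l)).trans (hcol l ?_)
          exact (mem_range.mp hl).trans_le hL
      _ = L := by simp

theorem Antitone.sum_range_sum_range_mul_mul_le {s t : ℕ → R} {W : ℕ → ℕ → R} {N : ℕ}
    (hs : Antitone s) (hs₀ : ∀ k, 0 ≤ s k) (ht : Antitone t) (ht₀ : ∀ l, 0 ≤ t l)
    (hW : ∀ k l, 0 ≤ W k l) (hrow : ∀ k < N, ∑ l ∈ range N, W k l ≤ 1)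
    (hcol : ∀ l < N, ∑ k ∈ range N, W k l ≤ 1) :
    ∑ k ∈ range N, ∑ l ∈ range N, s k * t l * W k l ≤ ∑ k ∈ range N, s k * t k := by
  have filter_range_lt (K L : ℕ) : (range L).filter (· < K) = range (min L K) := by
    ext; simp only [mem_filter, mem_range]; omega
  calc ∑ k ∈ range N, ∑ l ∈ range N, s k * t l * W k l
      = ∑ k ∈ range N, s k * ∑ l ∈ range N, t l * W k l := by simp only [mul_sum, mul_assoc]
    _ ≤ ∑ k ∈ range N, s k * t k := hs.sum_range_mul_le_sum_range_mul hs₀ fun K hK => ?_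
  -- The partial column sums `∑_{k<K} W k l` are dominated, in partial sums, by `𝟙[l < K]`.
  calc ∑ k ∈ range K, ∑ l ∈ range N, t l * W k l
      = ∑ l ∈ range N, t l * ∑ k ∈ range K, W k l := by rw [sum_comm]; simp only [mul_sum]
    _ ≤ ∑ l ∈ range N, t l * if l < K then 1 else 0 :=
        ht.sum_range_mul_le_sum_range_mul ht₀ fun L hL => by
          rw [sum_boole, sum_comm, filter_range_lt, card_range, min_comm]
          exact sum_range_sum_range_le_min hW hrow hcol hK hL
    _ = ∑ k ∈ range K, t k := by
        simp only [mul_boole]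
        rw [← sum_filter, filter_range_lt, min_eq_right hK]

end SummationByParts

section Columns

variable {ι κ α : Type*}

def Matrix.natCol [Zero α] {d : ℕ} (U : Matrix ι (Fin d) α) (k : ℕ) : ι → α :=
  fun i => if h : k < d then U i ⟨k, h⟩ else 0

theorem Matrix.natCol_of_le [Zero α] {d : ℕ} (U : Matrix ι (Fin d) α) {k : ℕ} (hk : d ≤ k) :
    U.natCol k = 0 := by
  funext i; simp [natCol, hk.not_gt]

theorem Matrix.natCol_dotProduct_self_le_one [Fintype ι] {d : ℕ} {U : Matrix ι (Fin d) ℝ}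
    (hU : Uᵀ * U = 1) (k : ℕ) : U.natCol k ⬝ᵥ U.natCol k ≤ 1 := by
  by_cases hk : k < d
  · have : U.natCol k ⬝ᵥ U.natCol k = (Uᵀ * U) ⟨k, hk⟩ ⟨k, hk⟩ := by
      simp [natCol, hk, dotProduct, mul_apply]
    rw [this, hU, one_apply_eq]
  · simp [natCol_of_le U (not_lt.mp hk)]

theorem Matrix.sum_range_dotProduct_natCol_sq_le [Fintype ι] [DecidableEq ι] {d : ℕ}
    {P : Matrix ι (Fin d) ℝ} (hP : P * Pᵀ = 1) (u : ι → ℝ) (M : ℕ) :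
    ∑ l ∈ range M, (u ⬝ᵥ P.natCol l) ^ 2 ≤ u ⬝ᵥ u := by
  have hcol (l : Fin d) : u ⬝ᵥ P.natCol l = (u ᵥ* P) l := by
    simp [natCol, dotProduct, vecMul]
  calc ∑ l ∈ range M, (u ⬝ᵥ P.natCol l) ^ 2
      = ∑ l ∈ range (min M d), (u ⬝ᵥ P.natCol l) ^ 2 := by
        refine (sum_subset (range_subset_range.mpr (min_le_left M d)) fun l hlM hl => ?_).symm
        have : d ≤ l := by simp only [mem_range] at hlM hl; omega
        simp [natCol_of_le P this]
    _ ≤ ∑ l ∈ range d, (u ⬝ᵥ P.natCol l) ^ 2 :=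
        sum_le_sum_of_subset_of_nonneg (range_subset_range.mpr (min_le_right M d))
          fun _ _ _ => sq_nonneg _
    _ = (u ᵥ* P) ⬝ᵥ (u ᵥ* P) := by
        rw [← Fin.sum_univ_eq_sum_range (fun l => (u ⬝ᵥ P.natCol l) ^ 2)]
        simp only [hcol, sq]
        rfl
    _ = u ⬝ᵥ u := by
        rw [← dotProduct_mulVec, ← vecMul_transpose, vecMul_vecMul, hP, vecMul_one]

theorem Matrix.sum_range_natCol_dotProduct_natCol_sq_le_one [Fintype ι] [DecidableEq ι]
    {d e : ℕ} {U : Matrix ι (Fin d) ℝ} {P : Matrix ι (Fin e) ℝ} (hU : Uᵀ * U = 1)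
    (hP : P * Pᵀ = 1) (k M : ℕ) :
    ∑ l ∈ range M, (U.natCol k ⬝ᵥ P.natCol l) ^ 2 ≤ 1 :=
  (sum_range_dotProduct_natCol_sq_le hP _ M).trans (natCol_dotProduct_self_le_one hU k)

theorem mul_svdDiagMat_apply {m n : ℕ} (U : Matrix ι (Fin m) ℝ) (s : ℕ → ℝ)
    (i : ι) (j : Fin n) : (U * svdDiagMat m n s) i j = s j * U.natCol j i := by
  simp only [mul_apply, svdDiagMat, of_apply, mul_ite, mul_zero, natCol]
  split_ifs with h
  · rw [sum_eq_single ⟨j, h⟩ (fun a _ ha => if_neg fun h' => ha (Fin.ext h')) (by simp),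
      if_pos rfl, mul_comm]
  · rw [mul_zero]
    exact sum_eq_zero fun a _ => if_neg fun (h' : (a : ℕ) = j) => h (h' ▸ a.isLt)

theorem mul_svdDiagMat_mul_transpose {m n : ℕ} (U : Matrix ι (Fin m) ℝ)
    (V : Matrix κ (Fin n) ℝ) (s : ℕ → ℝ) :
    U * svdDiagMat m n s * Vᵀ = ∑ k ∈ range n, s k • vecMulVec (U.natCol k) (V.natCol k) := by
  ext i j
  rw [mul_apply, Matrix.sum_apply, ← Fin.sum_univ_eq_sum_range]
  refine sum_congr rfl fun k _ => ?_
  simp [mul_svdDiagMat_apply, vecMulVec_apply, natCol, mul_assoc]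

end Columns

section TraceInner

variable {m n : ℕ}

theorem matInner_sum_smul_sum_smul {β γ : Type*} (S : Finset β) (T : Finset γ)
    (a : β → ℝ) (b : γ → ℝ) (A : β → Matrix (Fin m) (Fin n) ℝ)
    (B : γ → Matrix (Fin m) (Fin n) ℝ) :
    matInner (∑ k ∈ S, a k • A k) (∑ l ∈ T, b l • B l)
      = ∑ k ∈ S, ∑ l ∈ T, a k * b l * matInner (A k) (B l) := by
  simp only [matInner, Matrix.transpose_sum, transpose_smul, Matrix.sum_mul, Matrix.mul_sum,
    Matrix.smul_mul, Matrix.mul_smul, trace_sum, trace_smul, smul_eq_mul, Finset.mul_sum]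
  rw [sum_comm]
  exact sum_congr rfl fun _ _ => sum_congr rfl fun _ _ => by ring

theorem matInner_vecMulVec (a c : Fin m → ℝ) (b d : Fin n → ℝ) :
    matInner (vecMulVec a b) (vecMulVec c d) = (a ⬝ᵥ c) * (b ⬝ᵥ d) := by
  simp only [matInner, trace, diag_apply, mul_apply, transpose_apply, vecMulVec_apply,
    dotProduct, sum_mul_sum]
  rw [sum_comm]
  exact sum_congr rfl fun _ _ => sum_congr rfl fun _ _ => by ring

end TraceInner

theorem sum_range_sum_range_mul_mul_dotProduct_natCol_le {m n : ℕ} {s t : ℕ → ℝ}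
    (hs : Antitone s) (hs₀ : ∀ k, 0 ≤ s k) (ht : Antitone t) (ht₀ : ∀ l, 0 ≤ t l)
    {U P : Matrix (Fin m) (Fin m) ℝ} {V Q : Matrix (Fin n) (Fin n) ℝ} (hU : U * Uᵀ = 1)
    (hV : V * Vᵀ = 1) (hP : P * Pᵀ = 1) (hQ : Q * Qᵀ = 1) (N : ℕ) :
    ∑ k ∈ range N, ∑ l ∈ range N,
        s k * t l * ((U.natCol k ⬝ᵥ P.natCol l) * (V.natCol k ⬝ᵥ Q.natCol l))
      ≤ ∑ k ∈ range N, s k * t k := by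
  set W : ℕ → ℕ → ℝ := fun k l =>
    ((U.natCol k ⬝ᵥ P.natCol l) ^ 2 + (V.natCol k ⬝ᵥ Q.natCol l) ^ 2) / 2
  have hrow : ∀ k < N, ∑ l ∈ range N, W k l ≤ 1 := fun k _ => by
    have hUP := sum_range_natCol_dotProduct_natCol_sq_le_one (mul_eq_one_comm.mp hU) hP k N
    have hVQ := sum_range_natCol_dotProduct_natCol_sq_le_one (mul_eq_one_comm.mp hV) hQ k N
    simp only [W, ← sum_div, sum_add_distrib]; linarith
  have hcol : ∀ l < N, ∑ k ∈ range N, W k l ≤ 1 := fun l _ => by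
    have hPU := sum_range_natCol_dotProduct_natCol_sq_le_one (mul_eq_one_comm.mp hP) hU l N
    have hQV := sum_range_natCol_dotProduct_natCol_sq_le_one (mul_eq_one_comm.mp hQ) hV l N
    simp only [W, ← sum_div, sum_add_distrib, dotProduct_comm (P.natCol l),
      dotProduct_comm (Q.natCol l)] at hPU hQV ⊢
    linarith
  calc _ ≤ ∑ k ∈ range N, ∑ l ∈ range N, s k * t l * W k l := by
        refine sum_le_sum fun k _ => sum_le_sum fun l _ => ?_
        refine mul_le_mul_of_nonneg_left ?_ (mul_nonneg (hs₀ k) (ht₀ l))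
        simp only [W]
        linarith [two_mul_le_add_sq (U.natCol k ⬝ᵥ P.natCol l) (V.natCol k ⬝ᵥ Q.natCol l)]
    _ ≤ ∑ k ∈ range N, s k * t k :=
        hs.sum_range_sum_range_mul_mul_le hs₀ ht ht₀ (fun _ _ => by positivity) hrow hcol

/-- Von Neumann's trace inequality: ⟨X,Y⟩ = trace(XᵀY) ≤ ⟨σ(X),σ(Y)⟩. -/
theorem von_neumann_trace_inequality {m n : ℕ}
    (X Y : Matrix (Fin m) (Fin n) ℝ) (sX sY : ℕ → ℝ)
    (hX : IsOrderedSVD X sX) (hY : IsOrderedSVD Y sY) :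
    matInner X Y ≤ ∑ i ∈ Finset.range (min m n), sX i * sY i := by
  obtain ⟨hsX, hsX₀, hsXz, U, V, hU, hV, rfl⟩ := hX
  obtain ⟨hsY, hsY₀, -, P, Q, hP, hQ, rfl⟩ := hY
  rw [mul_svdDiagMat_mul_transpose, mul_svdDiagMat_mul_transpose, matInner_sum_smul_sum_smul]
  simp only [matInner_vecMulVec]
  calc _ ≤ ∑ k ∈ range n, sX k * sY k :=
        sum_range_sum_range_mul_mul_dotProduct_natCol_le hsX hsX₀ hsY hsY₀ hU hV hP hQ n
    _ = ∑ k ∈ range (min m n), sX k * sY k := by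
        refine (sum_subset (range_subset_range.mpr (min_le_right m n)) fun k _ hk => ?_).symm
        rw [hsXz k (not_lt.mp (mem_range.not.mp hk)), zero_mul]
end

section
/- Sufficiency of optimality conditions for robust PCA: if (X,Y) and Z satisfy (1) X+Y = M, (2) ⟨M,Z⟩ = 1, (3) ‖Y‖₁‖Z‖_∞ = ⟨Y,Z⟩, (4) σᵢ(X)(‖Z‖₂ − σᵢ(Z)) = 0 for all i, (5) X and Z admit a simultaneous ordered SVD, and (6) ‖Z‖₂ = ‖Z‖_∞/γ, then (X,Y) is optimal for min{‖X‖_* + γ‖Y‖₁ : X+Y = M} and Z is optimal for min{max{‖Z‖₂, ‖Z‖_∞/γ} : ⟨M,Z⟩ ≥ 1}. -/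
open Matrix

/-!
Weak duality: if `X' + Y' = M` and `1 ≤ ⟨M, Z'⟩`, then
`1 ≤ ⟨X', Z'⟩ + ⟨Y', Z'⟩ ≤ ‖X'‖_* ‖Z'‖₂ + ‖Y'‖₁ ‖Z'‖_∞`
`  ≤ (‖X'‖_* + γ ‖Y'‖₁) · max (‖Z'‖₂, ‖Z'‖_∞ / γ)`,
by the duality of the nuclear and spectral norms and Hölder's inequality for the entrywise norms.
Conditions (1)–(6) turn every step into an equality for `(X, Y, Z)`, so the two objective values
multiply to `1`, which forces both to be optimal.

Since `nuclearNorm` is a supremum over ordered SVDs, it needs two facts to be the sum of singular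
values: an ordered SVD exists (singular vectors of `toEuclideanLin X`), and any two give the same
sum, as `∑ s = ⟨X, U D₁ Vᵀ⟩ ≤ (∑ t) ‖U D₁ Vᵀ‖₂ ≤ ∑ t` for `D₁` the rectangular identity.
-/

open Module
open scoped Matrix.Norms.L2Operator

namespace LinearMap

variable {E F : Type*} [NormedAddCommGroup E] [InnerProductSpace ℝ E] [FiniteDimensional ℝ E]
  [NormedAddCommGroup F] [InnerProductSpace ℝ F] [FiniteDimensional ℝ F]
  (T : E →ₗ[ℝ] F)

lemma inner_apply_eigenvectorBasis_adjoint_comp_self {n : ℕ} (hn : finrank ℝ E = n)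
    (i j : Fin n) :
    inner ℝ (T (T.isSymmetric_adjoint_comp_self.eigenvectorBasis hn i))
      (T (T.isSymmetric_adjoint_comp_self.eigenvectorBasis hn j)) =
      if i = j then T.singularValues i ^ 2 else 0 := by
  rw [← adjoint_inner_right, ← comp_apply, T.isSymmetric_adjoint_comp_self.apply_eigenvectorBasis,
    real_inner_smul_right, orthonormal_iff_ite.mp (OrthonormalBasis.orthonormal _)]
  split_ifs with h
  · subst h; rw [T.sq_singularValues_fin hn]; simp
  · simp

lemma singularValues_of_finrank_le_right {i : ℕ} (hi : finrank ℝ F ≤ i) :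
    T.singularValues i = 0 :=
  T.singularValues_eq_zero_iff_le_finrank_range.mpr ((Submodule.finrank_le _).trans hi)

lemma exists_orthonormalBasis_inner_apply_eq_svdDiagMat {m n : ℕ} (hm : finrank ℝ F = m)
    (hn : finrank ℝ E = n) :
    ∃ (v : OrthonormalBasis (Fin n) ℝ E) (u : OrthonormalBasis (Fin m) ℝ F),
      ∀ i j, inner ℝ (u i) (T (v j)) = svdDiagMat m n T.singularValues i j := by
  set v := T.isSymmetric_adjoint_comp_self.eigenvectorBasis hn
  set σ : ℕ → ℝ := ⇑T.singularValues
  have hσn : ∀ k, σ k ≠ 0 → k < n := fun k hk => by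
    by_contra! h; exact hk (T.singularValues_of_finrank_le (hn ▸ h))
  have hσm : ∀ k, σ k ≠ 0 → k < m := fun k hk => by
    by_contra! h; exact hk (T.singularValues_of_finrank_le_right (hm ▸ h))
  -- the left singular vectors `σ k⁻¹ • T (v k)` for `σ k ≠ 0`, to be completed to a basis of `F`
  let w : Fin m → F := fun i => if h : (i : ℕ) < n then (σ i)⁻¹ • T (v ⟨i, h⟩) else 0
  let S : Set (Fin m) := {i | σ i ≠ 0}
  have hw : Orthonormal ℝ (S.domRestrict w) := by
    rw [orthonormal_iff_ite]
    rintro ⟨i, hi⟩ ⟨j, hj⟩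
    simp only [Set.domRestrict_apply, w]
    rw [dif_pos (hσn i hi), dif_pos (hσn j hj), real_inner_smul_left, real_inner_smul_right,
      T.inner_apply_eigenvectorBasis_adjoint_comp_self hn]
    by_cases h : i = j
    · subst h
      simp only [if_true]
      field_simp [show σ i ≠ 0 from hi]
      rfl
    · rw [if_neg fun h' => h (Fin.ext (Fin.mk.inj h')),
        if_neg fun h' => h (Subtype.ext_iff.mp h')]
      simp
  obtain ⟨u, hu⟩ := hw.exists_orthonormalBasis_extension_of_card_eq (by simp [hm])
  refine ⟨v, u, fun i j => ?_⟩
  by_cases hj : σ j = 0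
  · have hTv : T (v j) = 0 := by
      rw [← inner_self_eq_zero (𝕜 := ℝ), T.inner_apply_eigenvectorBasis_adjoint_comp_self hn,
        if_pos rfl]
      exact (pow_eq_zero_iff two_ne_zero).mpr hj
    simp only [hTv, inner_zero_right, svdDiagMat, of_apply]
    split_ifs with h
    · rw [h]; exact hj.symm
    · rfl
  · let j' : Fin m := ⟨j, hσm j hj⟩
    have hTv : T (v j) = σ j • u j' := by
      rw [hu j' hj]
      simp only [w, j', dif_pos j.isLt, smul_smul, mul_inv_cancel₀ hj, one_smul]
    rw [hTv, real_inner_smul_right, orthonormal_iff_ite.mp u.orthonormal]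
    simp only [svdDiagMat, of_apply, j', Fin.ext_iff]
    split_ifs with h
    · rw [h]; simp [σ]
    · simp

end LinearMap

namespace Matrix

variable {m n : ℕ}

lemma matSpectralNorm_eq_l2_opNorm (A : Matrix (Fin m) (Fin n) ℝ) : matSpectralNorm A = ‖A‖ := rfl

lemma matInner_eq_sum (A B : Matrix (Fin m) (Fin n) ℝ) :
    matInner A B = ∑ i, ∑ j, A i j * B i j := by
  rw [Finset.sum_comm]
  simp [matInner, trace, mul_apply]

lemma matInner_add_left (A B C : Matrix (Fin m) (Fin n) ℝ) :
    matInner (A + B) C = matInner A C + matInner B C := by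
  simp [matInner, Matrix.add_mul, trace_add]

lemma matInner_mul_mul_transpose_left {U : Matrix (Fin m) (Fin m) ℝ} {V : Matrix (Fin n) (Fin n) ℝ}
    (A B : Matrix (Fin m) (Fin n) ℝ) :
    matInner (U * A * Vᵀ) B = matInner A (Uᵀ * B * V) := by
  simp only [matInner, transpose_mul, transpose_transpose, Matrix.mul_assoc]
  rw [trace_mul_comm]
  simp only [Matrix.mul_assoc]

lemma matInner_svdDiagMat_left (s : ℕ → ℝ) (W : Matrix (Fin m) (Fin n) ℝ) :
    matInner (svdDiagMat m n s) W = ∑ k : Fin (min m n),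
      s k * W (Fin.castLE (min_le_left m n) k) (Fin.castLE (min_le_right m n) k) := by
  rw [matInner_eq_sum]
  symm
  refine Fintype.sum_of_injective _ (Fin.castLE_injective (min_le_left m n)) _ _ ?_ ?_
  · intro i hi
    refine Finset.sum_eq_zero fun j _ => ?_
    simp only [svdDiagMat, of_apply, ite_mul, zero_mul]
    exact if_neg fun (hij : (i : ℕ) = j) => hi ⟨⟨i, lt_min i.isLt (hij ▸ j.isLt)⟩, rfl⟩
  · intro k
    rw [Finset.sum_eq_single (Fin.castLE (min_le_right m n) k)]
    · simp [svdDiagMat]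
    · intro j _ hj
      simp only [svdDiagMat, of_apply, Fin.val_castLE, ite_mul, zero_mul]
      exact if_neg fun h => hj (Fin.ext h.symm)
    · simp

lemma abs_le_maxNorm (Z : Matrix (Fin m) (Fin n) ℝ) (i : Fin m) (j : Fin n) :
    |Z i j| ≤ maxNorm Z :=
  (le_ciSup (Set.finite_range _).bddAbove j).trans
    (le_ciSup (f := fun i => ⨆ j, |Z i j|) (Set.finite_range _).bddAbove i)

lemma l1Norm_nonneg (Y : Matrix (Fin m) (Fin n) ℝ) : 0 ≤ l1Norm Y :=
  Finset.sum_nonneg fun _ _ => Finset.sum_nonneg fun _ _ => abs_nonneg _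

lemma matInner_le_l1Norm_mul_maxNorm (Y Z : Matrix (Fin m) (Fin n) ℝ) :
    matInner Y Z ≤ l1Norm Y * maxNorm Z := by
  simp only [matInner_eq_sum, l1Norm, Finset.sum_mul]
  refine Finset.sum_le_sum fun i _ => Finset.sum_le_sum fun j _ => ?_
  calc Y i j * Z i j ≤ |Y i j| * |Z i j| := by rw [← abs_mul]; exact le_abs_self _
    _ ≤ |Y i j| * maxNorm Z := by gcongr; exact abs_le_maxNorm Z i j

lemma abs_apply_le_l2_opNorm {p q : Type*} [Fintype p] [Fintype q] [DecidableEq q]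
    (A : Matrix p q ℝ) (i : p) (j : q) : |A i j| ≤ ‖A‖ := by
  have h := A.l2_opNorm_mulVec (EuclideanSpace.single j 1)
  have h2 := PiLp.norm_apply_le ((EuclideanSpace.equiv p ℝ).symm (A *ᵥ EuclideanSpace.single j 1)) i
  simpa using h2.trans h

lemma l2_opNorm_le_one_of_transpose_mul_self_eq_diagonal {p q : Type*} [Fintype p] [Fintype q]
    [DecidableEq q] {A : Matrix p q ℝ} {d : q → ℝ} (hA : Aᵀ * A = diagonal d) (hd : ‖d‖ ≤ 1) :
    ‖A‖ ≤ 1 := by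
  have h : ‖A‖ * ‖A‖ ≤ 1 := by
    rw [← l2_opNorm_conjTranspose_mul_self, conjTranspose_eq_transpose_of_trivial, hA,
      l2_opNorm_diagonal]
    exact hd
  nlinarith [norm_nonneg A]

lemma l2_opNorm_le_one_of_transpose_mul_self {p q : Type*} [Fintype p] [Fintype q]
    [DecidableEq q] {A : Matrix p q ℝ} (hA : Aᵀ * A = 1) : ‖A‖ ≤ 1 :=
  l2_opNorm_le_one_of_transpose_mul_self_eq_diagonal (d := 1) hA
    (pi_norm_le_iff_of_nonneg zero_le_one |>.2 fun _ => by simp)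

lemma transpose_mul_svdDiagMat_one :
    (svdDiagMat m n fun _ => 1)ᵀ * svdDiagMat m n (fun _ => 1) =
      diagonal fun j : Fin n => if (j : ℕ) < m then 1 else 0 := by
  ext j j'
  simp only [mul_apply, transpose_apply, svdDiagMat, of_apply, diagonal_apply, mul_ite, mul_one,
    mul_zero]
  rw [Fin.sum_univ_eq_sum_range (fun i => if i = (j' : ℕ) then if i = j then (1 : ℝ) else 0 else 0)]
  simp only [Finset.sum_ite_eq', Finset.mem_range, Fin.ext_iff]
  by_cases h : (j : ℕ) = j'
  · simp [h]
  · simp [h, Ne.symm h]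

lemma l2_opNorm_svdDiagMat_one_le : ‖svdDiagMat m n fun _ => 1‖ ≤ 1 :=
  l2_opNorm_le_one_of_transpose_mul_self_eq_diagonal transpose_mul_svdDiagMat_one
    (pi_norm_le_iff_of_nonneg zero_le_one |>.2 fun j => by split_ifs <;> simp)

lemma l2_opNorm_mul_mul_le {p q r s : Type*} [Fintype p] [Fintype q] [Fintype r] [Fintype s]
    [DecidableEq q] [DecidableEq r] [DecidableEq s]
    (A : Matrix p q ℝ) (B : Matrix q r ℝ) (C : Matrix r s ℝ) : ‖A * B * C‖ ≤ ‖A‖ * ‖B‖ * ‖C‖ :=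
  (l2_opNorm_mul _ _).trans (by gcongr; exact l2_opNorm_mul _ _)

lemma l2_opNorm_transpose_mul_mul_le {U : Matrix (Fin m) (Fin m) ℝ} {V : Matrix (Fin n) (Fin n) ℝ}
    (hU : U * Uᵀ = 1) (hV : V * Vᵀ = 1) (Z : Matrix (Fin m) (Fin n) ℝ) : ‖Uᵀ * Z * V‖ ≤ ‖Z‖ := by
  have hU' : ‖Uᵀ‖ ≤ 1 :=
    l2_opNorm_le_one_of_transpose_mul_self (by rwa [transpose_transpose])
  have hV' : ‖V‖ ≤ 1 := l2_opNorm_le_one_of_transpose_mul_self (mul_eq_one_comm.mp hV)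
  calc ‖Uᵀ * Z * V‖ ≤ ‖Uᵀ‖ * ‖Z‖ * ‖V‖ := l2_opNorm_mul_mul_le _ _ _
    _ ≤ 1 * ‖Z‖ * 1 := by gcongr
    _ = ‖Z‖ := by ring

lemma matInner_le_sum_mul_l2_opNorm {X : Matrix (Fin m) (Fin n) ℝ} {s : ℕ → ℝ}
    (hs : IsOrderedSVD X s) (Z : Matrix (Fin m) (Fin n) ℝ) :
    matInner X Z ≤ (∑ k ∈ Finset.range (min m n), s k) * ‖Z‖ := by
  obtain ⟨-, hs_nonneg, -, U, V, hU, hV, rfl⟩ := hs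
  rw [matInner_mul_mul_transpose_left, matInner_svdDiagMat_left, ← Fin.sum_univ_eq_sum_range,
    Finset.sum_mul]
  refine Finset.sum_le_sum fun k _ => mul_le_mul_of_nonneg_left ?_ (hs_nonneg k)
  exact (le_abs_self _).trans ((abs_apply_le_l2_opNorm _ _ _).trans
    (l2_opNorm_transpose_mul_mul_le hU hV Z))

lemma matInner_mul_svdDiagMat_mul_transpose {U : Matrix (Fin m) (Fin m) ℝ}
    {V : Matrix (Fin n) (Fin n) ℝ} (hU : U * Uᵀ = 1) (hV : V * Vᵀ = 1) (s t : ℕ → ℝ) :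
    matInner (U * svdDiagMat m n s * Vᵀ) (U * svdDiagMat m n t * Vᵀ) =
      ∑ k ∈ Finset.range (min m n), s k * t k := by
  have hW : Uᵀ * (U * svdDiagMat m n t * Vᵀ) * V = svdDiagMat m n t := by
    simp only [← Matrix.mul_assoc, mul_eq_one_comm.mp hU, Matrix.one_mul]
    simp only [Matrix.mul_assoc, mul_eq_one_comm.mp hV, Matrix.mul_one]
  rw [matInner_mul_mul_transpose_left, hW, matInner_svdDiagMat_left,
    ← Fin.sum_univ_eq_sum_range (fun k => s k * t k)]
  simp [svdDiagMat]

lemma sum_le_sum_of_isOrderedSVD {X : Matrix (Fin m) (Fin n) ℝ} {s t : ℕ → ℝ}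
    (hs : IsOrderedSVD X s) (ht : IsOrderedSVD X t) :
    ∑ k ∈ Finset.range (min m n), s k ≤ ∑ k ∈ Finset.range (min m n), t k := by
  obtain ⟨-, -, -, U, V, hU, hV, hX⟩ := id hs
  have hUt : ‖U‖ ≤ 1 := l2_opNorm_le_one_of_transpose_mul_self (mul_eq_one_comm.mp hU)
  have hVt : ‖Vᵀ‖ ≤ 1 := l2_opNorm_le_one_of_transpose_mul_self (by rwa [transpose_transpose])
  set W := U * svdDiagMat m n (fun _ => 1) * Vᵀ
  have hW : ‖W‖ ≤ 1 :=
    calc ‖W‖ ≤ ‖U‖ * ‖svdDiagMat m n fun _ => 1‖ * ‖Vᵀ‖ := l2_opNorm_mul_mul_le _ _ _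
      _ ≤ 1 * 1 * 1 := by gcongr; exact l2_opNorm_svdDiagMat_one_le
      _ = 1 := by ring
  have ht_nonneg : 0 ≤ ∑ k ∈ Finset.range (min m n), t k :=
    Finset.sum_nonneg fun k _ => ht.2.1 k
  calc ∑ k ∈ Finset.range (min m n), s k = matInner X W := by
        simp [hX, W, matInner_mul_svdDiagMat_mul_transpose hU hV]
    _ ≤ (∑ k ∈ Finset.range (min m n), t k) * ‖W‖ := matInner_le_sum_mul_l2_opNorm ht W
    _ ≤ ∑ k ∈ Finset.range (min m n), t k := mul_le_of_le_one_right ht_nonneg hW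

lemma transpose_mul_mul_toMatrix_apply (u : OrthonormalBasis (Fin m) ℝ (EuclideanSpace ℝ (Fin m)))
    (v : OrthonormalBasis (Fin n) ℝ (EuclideanSpace ℝ (Fin n))) (X : Matrix (Fin m) (Fin n) ℝ)
    (i : Fin m) (j : Fin n) :
    (((EuclideanSpace.basisFun (Fin m) ℝ).toBasis.toMatrix u)ᵀ * X *
      (EuclideanSpace.basisFun (Fin n) ℝ).toBasis.toMatrix v) i j =
      inner ℝ (u i) (toEuclideanLin X (v j)) := by
  simp only [mul_apply, transpose_apply, Module.Basis.toMatrix_apply,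
    OrthonormalBasis.coe_toBasis_repr_apply, EuclideanSpace.basisFun_repr, PiLp.inner_apply,
    RCLike.inner_apply, conj_trivial, toLpLin_apply, mulVec, dotProduct,
    Finset.sum_mul]
  rw [Finset.sum_comm]
  exact Finset.sum_congr rfl fun _ _ => Finset.sum_congr rfl fun _ _ => by ring

lemma exists_isOrderedSVD (X : Matrix (Fin m) (Fin n) ℝ) : ∃ s, IsOrderedSVD X s := by
  set T := toEuclideanLin X
  obtain ⟨v, u, huv⟩ := T.exists_orthonormalBasis_inner_apply_eq_svdDiagMat
    (finrank_euclideanSpace_fin) (finrank_euclideanSpace_fin)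
  set U := (EuclideanSpace.basisFun (Fin m) ℝ).toBasis.toMatrix u
  set V := (EuclideanSpace.basisFun (Fin n) ℝ).toBasis.toMatrix v
  have hU : U * Uᵀ = 1 := by
    simpa using
      (EuclideanSpace.basisFun (Fin m) ℝ).toMatrix_orthonormalBasis_self_mul_conjTranspose u
  have hV : V * Vᵀ = 1 := by
    simpa using
      (EuclideanSpace.basisFun (Fin n) ℝ).toMatrix_orthonormalBasis_self_mul_conjTranspose v
  have hUXV : Uᵀ * X * V = svdDiagMat m n T.singularValues := by
    ext i j
    rw [transpose_mul_mul_toMatrix_apply, huv]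
  refine ⟨T.singularValues, T.singularValues_antitone, T.singularValues_nonneg, fun k hk => ?_,
    U, V, hU, hV, ?_⟩
  · rcases min_le_iff.mp hk with hk | hk
    · exact T.singularValues_of_finrank_le_right (by simpa using hk)
    · exact T.singularValues_of_finrank_le (by simpa using hk)
  · rw [← hUXV]
    simp only [← Matrix.mul_assoc, hU, Matrix.one_mul]
    simp only [Matrix.mul_assoc, hV, Matrix.mul_one]

lemma nuclearNorm_eq_sum {X : Matrix (Fin m) (Fin n) ℝ} {s : ℕ → ℝ} (hs : IsOrderedSVD X s) :
    nuclearNorm X = ∑ k ∈ Finset.range (min m n), s k :=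
  IsGreatest.csSup_eq
    ⟨⟨s, hs, rfl⟩, by rintro _ ⟨t, ht, rfl⟩; exact sum_le_sum_of_isOrderedSVD ht hs⟩

lemma nuclearNorm_nonneg (X : Matrix (Fin m) (Fin n) ℝ) : 0 ≤ nuclearNorm X := by
  obtain ⟨s, hs⟩ := exists_isOrderedSVD X
  rw [nuclearNorm_eq_sum hs]
  exact Finset.sum_nonneg fun k _ => hs.2.1 k

lemma matInner_le_nuclearNorm_mul_matSpectralNorm (X Z : Matrix (Fin m) (Fin n) ℝ) :
    matInner X Z ≤ nuclearNorm X * matSpectralNorm Z := by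
  obtain ⟨s, hs⟩ := exists_isOrderedSVD X
  rw [nuclearNorm_eq_sum hs, matSpectralNorm_eq_l2_opNorm]
  exact matInner_le_sum_mul_l2_opNorm hs Z

lemma rpca_weak_duality {γ : ℝ} (hγ : 0 < γ) {M X Y Z : Matrix (Fin m) (Fin n) ℝ}
    (hXY : X + Y = M) (hZ : 1 ≤ matInner M Z) :
    1 ≤ (nuclearNorm X + γ * l1Norm Y) * max (matSpectralNorm Z) (maxNorm Z / γ) := by
  have hX := nuclearNorm_nonneg X
  have hY := l1Norm_nonneg Y
  calc 1 ≤ matInner X Z + matInner Y Z := by rwa [← matInner_add_left, hXY]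
    _ ≤ nuclearNorm X * matSpectralNorm Z + γ * l1Norm Y * (maxNorm Z / γ) := by
        rw [show γ * l1Norm Y * (maxNorm Z / γ) = l1Norm Y * maxNorm Z by field_simp]
        exact add_le_add (matInner_le_nuclearNorm_mul_matSpectralNorm X Z)
          (matInner_le_l1Norm_mul_maxNorm Y Z)
    _ ≤ nuclearNorm X * max (matSpectralNorm Z) (maxNorm Z / γ) +
          γ * l1Norm Y * max (matSpectralNorm Z) (maxNorm Z / γ) := by
        gcongr
        exacts [le_max_left _ _, le_max_right _ _]
    _ = (nuclearNorm X + γ * l1Norm Y) * max (matSpectralNorm Z) (maxNorm Z / γ) := by ring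

end Matrix

theorem rpca_optimality_sufficient_general {m n : ℕ} (M : Matrix (Fin m) (Fin n) ℝ)
    (γ : ℝ) (hγ : 0 < γ)
    (X Y Z : Matrix (Fin m) (Fin n) ℝ) (sX sZ : ℕ → ℝ)
    (hsX : IsOrderedSVD X sX)
    (h1 : X + Y = M)
    (h2 : matInner M Z = 1)
    (h3 : l1Norm Y * maxNorm Z = matInner Y Z)
    (h4 : ∀ i, sX i * (matSpectralNorm Z - sZ i) = 0)
    (h5 : ∃ (U : Matrix (Fin m) (Fin m) ℝ) (V : Matrix (Fin n) (Fin n) ℝ),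
      U * Uᵀ = 1 ∧ V * Vᵀ = 1 ∧ X = U * svdDiagMat m n sX * Vᵀ ∧ Z = U * svdDiagMat m n sZ * Vᵀ)
    (h6 : matSpectralNorm Z = maxNorm Z / γ) :
    (∀ X' Y' : Matrix (Fin m) (Fin n) ℝ, X' + Y' = M →
      nuclearNorm X + γ * l1Norm Y ≤ nuclearNorm X' + γ * l1Norm Y') ∧
    (∀ Z' : Matrix (Fin m) (Fin n) ℝ, 1 ≤ matInner M Z' →
      max (matSpectralNorm Z) (maxNorm Z / γ) ≤ max (matSpectralNorm Z') (maxNorm Z' / γ)) := by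
  obtain ⟨U, V, hU, hV, hX, hZ⟩ := h5
  have hXZ : matInner X Z = nuclearNorm X * matSpectralNorm Z := by
    rw [nuclearNorm_eq_sum hsX, Finset.sum_mul]
    calc matInner X Z = ∑ k ∈ Finset.range (min m n), sX k * sZ k := by
          rw [hX, hZ, matInner_mul_svdDiagMat_mul_transpose hU hV]
      _ = _ := Finset.sum_congr rfl fun k _ => by linarith [mul_sub (sX k) _ (sZ k) ▸ h4 k]
  have hYZ : matInner Y Z = γ * l1Norm Y * matSpectralNorm Z := by
    rw [← h3, h6]
    field_simp
  have hgap : (nuclearNorm X + γ * l1Norm Y) * max (matSpectralNorm Z) (maxNorm Z / γ) = 1 := by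
    rw [← h6, max_self, ← h2, ← h1, matInner_add_left, hXZ, hYZ]
    ring
  have hprimal_nonneg : 0 ≤ nuclearNorm X + γ * l1Norm Y :=
    add_nonneg (nuclearNorm_nonneg X) (mul_nonneg hγ.le (l1Norm_nonneg Y))
  have hdual_nonneg : 0 ≤ max (matSpectralNorm Z) (maxNorm Z / γ) :=
    le_max_of_le_left (matSpectralNorm_eq_l2_opNorm Z ▸ norm_nonneg _)
  constructor
  · intro X' Y' hXY'
    exact le_of_mul_le_mul_right (hgap.trans_le (rpca_weak_duality hγ hXY' h2.ge))
      (pos_of_mul_pos_right (hgap ▸ one_pos) hprimal_nonneg)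
  · intro Z' hZ'
    exact le_of_mul_le_mul_left (hgap.trans_le (rpca_weak_duality hγ h1 hZ'))
      (pos_of_mul_pos_left (hgap ▸ one_pos) hdual_nonneg)

/-- Sufficiency of the optimality conditions for the robust PCA primal-dual gauge pair. -/
theorem rpca_optimality_sufficient {m n : ℕ} (M : Matrix (Fin m) (Fin n) ℝ) (hM : M ≠ 0)
    (γ : ℝ) (hγ : 0 < γ)
    (X Y Z : Matrix (Fin m) (Fin n) ℝ) (sX sZ : ℕ → ℝ)
    (hsX : IsOrderedSVD X sX) (hsZ : IsOrderedSVD Z sZ)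
    (h1 : X + Y = M)
    (h2 : matInner M Z = 1)
    (h3 : l1Norm Y * maxNorm Z = matInner Y Z)
    (h4 : ∀ i, sX i * (matSpectralNorm Z - sZ i) = 0)
    (h5 : ∃ (U : Matrix (Fin m) (Fin m) ℝ) (V : Matrix (Fin n) (Fin n) ℝ),
      U * Uᵀ = 1 ∧ V * Vᵀ = 1 ∧ X = U * svdDiagMat m n sX * Vᵀ ∧ Z = U * svdDiagMat m n sZ * Vᵀ)
    (h6 : matSpectralNorm Z = maxNorm Z / γ) :
    (∀ X' Y' : Matrix (Fin m) (Fin n) ℝ, X' + Y' = M →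
      nuclearNorm X + γ * l1Norm Y ≤ nuclearNorm X' + γ * l1Norm Y') ∧
    (∀ Z' : Matrix (Fin m) (Fin n) ℝ, 1 ≤ matInner M Z' →
      max (matSpectralNorm Z) (maxNorm Z / γ) ≤ max (matSpectralNorm Z') (maxNorm Z' / γ)) :=
  rpca_optimality_sufficient_general M γ hγ X Y Z sX sZ hsX h1 h2 h3 h4 h5 h6
end

section
/- SDP optimality conditions: let κ(X) = ⟨C,X⟩ + δ(X | X ⪰ 0) and κ°(Z) = inf{μ ≥ 0 : μC − Z ⪰ 0}. Suppose the gauge dual min{κ°(Aᵀy) : bᵀy ≥ 1} has an optimal solution, the primal optimal value p* = min{κ(X) : AX = b} is positive, and strong duality p*·d* = 1 holds. Then X* and y* are respectively primal and dual optimal if and only if AX* = b, X* ⪰ 0, bᵀy* = 1, and ⟨μ_{y*}C − Aᵀy*, X*⟩ = 0, where μ_{y*} = κ°(Aᵀy*). -/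
/-!
Write `p*` and `d*` for the primal and gauge dual values; `p* · d* = 1` with `p* > 0` forces both
to be finite reals. For `AX = b`, the gap `⟨μ C − Aᵀy, X⟩` equals `μ ⟨C, X⟩ − bᵀy`. If `X*`, `y*`
are optimal, then `κ°(Aᵀy*) = d*` is attained (the feasible set of `μ` is closed), so the gap is
the trace of a product of two PSD matrices: `0 ≤ d* p* − bᵀy* = 1 − bᵀy*`, which forces
`bᵀy* = 1` and a zero gap. Conversely a zero gap gives `μ ⟨C, X*⟩ = 1 = p* d*` with
`p* ≤ ⟨C, X*⟩` and `d* ≤ μ`, so both inequalities are equalities.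
-/

open Matrix

/-- κ°(Z) = inf {μ ≥ 0 : μC − Z ⪰ 0}, the polar of κ(X) = ⟨C,X⟩ + δ(X | X ⪰ 0),
with value ⊤ if no such μ exists. -/
noncomputable def sdpPolar {n : ℕ} (C : Matrix (Fin n) (Fin n) ℝ)
    (Z : Matrix (Fin n) (Fin n) ℝ) : EReal :=
  sInf {t : EReal | ∃ μ : ℝ, 0 ≤ μ ∧ t = (μ : EReal) ∧ (μ • C - Z).PosSemidef}

open scoped ComplexOrder in
theorem Matrix.PosSemidef.trace_mul_nonneg {n 𝕜 : Type*} [Fintype n] [RCLike 𝕜]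
    {A B : Matrix n n 𝕜} (hA : A.PosSemidef) (hB : B.PosSemidef) :
    0 ≤ (A * B).trace := by
  classical
  open scoped MatrixOrder in
  obtain ⟨S, hS, rfl⟩ : ∃ S : Matrix n n 𝕜, S.PosSemidef ∧ B = S * S :=
    ⟨CFC.sqrt B, (CFC.sqrt_nonneg B).posSemidef, (CFC.sqrt_mul_sqrt_self B hB.nonneg).symm⟩
  rw [← Matrix.mul_assoc, trace_mul_comm, ← Matrix.mul_assoc]
  simpa only [hS.isHermitian.eq] using (hA.conjTranspose_mul_mul_same S).trace_nonneg

theorem Matrix.isClosed_setOf_posSemidef {n R : Type*} [Fintype n] [CommRing R] [PartialOrder R]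
    [StarRing R] [TopologicalSpace R] [T2Space R] [IsTopologicalRing R] [ContinuousStar R]
    [ClosedIciTopology R] :
    IsClosed {M : Matrix n n R | M.PosSemidef} := by
  simp only [posSemidef_iff_dotProduct_mulVec, Set.ofPred_and, Set.ofPred_forall]
  exact (isClosed_eq (by fun_prop) continuous_id).inter
    (isClosed_iInter fun x => isClosed_Ici.preimage (by fun_prop))

theorem EReal.exists_coe_of_mul_eq_one {x y : EReal} (h : x * y = 1) :
    ∃ a b : ℝ, x = a ∧ y = b ∧ a * b = 1 := by
  have hfin : x * y ≠ ⊤ ∧ x * y ≠ ⊥ := by simp [h, ← EReal.coe_one]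
  have h0 : x ≠ 0 ∧ y ≠ 0 := by constructor <;> rintro rfl <;> simp at h
  rw [EReal.mul_ne_top, EReal.mul_ne_bot] at hfin
  induction x using EReal.rec <;> induction y using EReal.rec
  all_goals simp_all [← EReal.coe_one, ← EReal.coe_mul]
  all_goals grind

theorem IsClosed.mem_of_sInf_image_coe_eq {S : Set ℝ} (hS : IsClosed S) {c : ℝ}
    (h : sInf (((↑) : ℝ → EReal) '' S) = c) : c ∈ S := by
  obtain rfl | hne := S.eq_empty_or_nonempty
  · simp at h
  rw [← hS.closure_eq, EReal.isEmbedding_coe.isInducing.closure_eq_preimage_closure_image]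
  have := sInf_mem_closure (hne.image ((↑) : ℝ → EReal))
  rwa [h] at this

section Polar

variable {n : ℕ} (C Z : Matrix (Fin n) (Fin n) ℝ)

theorem sdpPolar_eq_sInf_image :
    sdpPolar C Z = sInf (((↑) : ℝ → EReal) '' {μ | 0 ≤ μ ∧ (μ • C - Z).PosSemidef}) := by
  unfold sdpPolar
  congr 1
  ext t
  exact ⟨fun ⟨μ, hμ, ht, hpsd⟩ => ⟨μ, ⟨hμ, hpsd⟩, ht.symm⟩,
    fun ⟨μ, ⟨hμ, hpsd⟩, ht⟩ => ⟨μ, hμ, ht.symm, hpsd⟩⟩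

theorem sdpPolar_nonneg : 0 ≤ sdpPolar C Z :=
  le_sInf fun _ ⟨_, hμ, ht, _⟩ => ht ▸ EReal.coe_nonneg.2 hμ

theorem isClosed_sdpPolar_feasible : IsClosed {μ : ℝ | 0 ≤ μ ∧ (μ • C - Z).PosSemidef} :=
  isClosed_Ici.inter (isClosed_setOf_posSemidef.preimage (by fun_prop))

variable {C Z}

theorem posSemidef_smul_sub_of_sdpPolar_eq {c : ℝ} (h : sdpPolar C Z = c) :
    (c • C - Z).PosSemidef :=
  ((isClosed_sdpPolar_feasible C Z).mem_of_sInf_image_coe_eq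
    ((sdpPolar_eq_sInf_image C Z).symm.trans h)).2

end Polar

section Duality

variable {n m : ℕ} {C : Matrix (Fin n) (Fin n) ℝ}
  {A : Matrix (Fin n) (Fin n) ℝ →ₗ[ℝ] (Fin m → ℝ)}
  {At : (Fin m → ℝ) →ₗ[ℝ] Matrix (Fin n) (Fin n) ℝ} {b : Fin m → ℝ}

variable (C A At b) in
noncomputable def sdpPrimalValue : EReal :=
  sInf {t : EReal | ∃ X : Matrix (Fin n) (Fin n) ℝ,
    X.PosSemidef ∧ A X = b ∧ t = ((Matrix.trace (C * X) : ℝ) : EReal)}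

variable (C A At b) in
noncomputable def gaugeDualValue : EReal :=
  sInf {t : EReal | ∃ y : Fin m → ℝ, 1 ≤ b ⬝ᵥ y ∧ t = sdpPolar C (At y)}

theorem sdpPrimalValue_le {X : Matrix (Fin n) (Fin n) ℝ} (hX : X.PosSemidef) (hAX : A X = b) :
    sdpPrimalValue C A b ≤ ((trace (C * X) : ℝ) : EReal) :=
  sInf_le ⟨X, hX, hAX, rfl⟩

theorem coe_trace_eq_sdpPrimalValue_iff {X : Matrix (Fin n) (Fin n) ℝ} (hX : X.PosSemidef)
    (hAX : A X = b) :
    ((trace (C * X) : ℝ) : EReal) = sdpPrimalValue C A b ↔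
      ∀ X', X'.PosSemidef → A X' = b → trace (C * X) ≤ trace (C * X') := by
  refine ⟨fun h X' hX' hAX' => ?_, fun h => le_antisymm ?_ (sdpPrimalValue_le hX hAX)⟩
  · exact EReal.coe_le_coe_iff.1 (h ▸ sdpPrimalValue_le hX' hAX')
  · exact le_sInf fun _ ⟨X', hX', hAX', ht⟩ => ht ▸ EReal.coe_le_coe_iff.2 (h X' hX' hAX')

theorem gaugeDualValue_le {y : Fin m → ℝ} (hy : 1 ≤ b ⬝ᵥ y) :
    gaugeDualValue C At b ≤ sdpPolar C (At y) :=
  sInf_le ⟨y, hy, rfl⟩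

theorem sdpPolar_eq_gaugeDualValue_iff {y : Fin m → ℝ} (hy : 1 ≤ b ⬝ᵥ y) :
    sdpPolar C (At y) = gaugeDualValue C At b ↔
      ∀ y', 1 ≤ b ⬝ᵥ y' → sdpPolar C (At y) ≤ sdpPolar C (At y') := by
  refine ⟨fun h y' hy' => h ▸ gaugeDualValue_le hy', fun h => le_antisymm ?_ (gaugeDualValue_le hy)⟩
  exact le_sInf fun _ ⟨y', hy', ht⟩ => ht ▸ h y' hy'

theorem trace_smul_sub_mul_eq_of_adjoint
    (hadj : ∀ X y, A X ⬝ᵥ y = trace (At y * X)) {X : Matrix (Fin n) (Fin n) ℝ} (hAX : A X = b)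
    (μ : ℝ) (y : Fin m → ℝ) :
    trace ((μ • C - At y) * X) = μ * trace (C * X) - b ⬝ᵥ y := by
  rw [Matrix.sub_mul, trace_sub, Matrix.smul_mul, trace_smul, smul_eq_mul, ← hadj, hAX]

end Duality

theorem sdp_gauge_optimality_conditions_general {n m : ℕ}
    (C : Matrix (Fin n) (Fin n) ℝ)
    (A : Matrix (Fin n) (Fin n) ℝ →ₗ[ℝ] (Fin m → ℝ))
    (At : (Fin m → ℝ) →ₗ[ℝ] Matrix (Fin n) (Fin n) ℝ)
    (hadj : ∀ (X : Matrix (Fin n) (Fin n) ℝ) (y : Fin m → ℝ),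
      (A X) ⬝ᵥ y = Matrix.trace (At y * X))
    (b : Fin m → ℝ)
    (hp : 0 < sInf {t : EReal | ∃ X : Matrix (Fin n) (Fin n) ℝ,
      X.PosSemidef ∧ A X = b ∧ t = ((Matrix.trace (C * X) : ℝ) : EReal)})
    (hstrong : sInf {t : EReal | ∃ X : Matrix (Fin n) (Fin n) ℝ,
        X.PosSemidef ∧ A X = b ∧ t = ((Matrix.trace (C * X) : ℝ) : EReal)} *
      sInf {t : EReal | ∃ y : Fin m → ℝ, 1 ≤ b ⬝ᵥ y ∧ t = sdpPolar C (At y)} = 1)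
    (Xstar : Matrix (Fin n) (Fin n) ℝ) (ystar : Fin m → ℝ) :
    ((Xstar.PosSemidef ∧ A Xstar = b ∧
        (∀ X : Matrix (Fin n) (Fin n) ℝ, X.PosSemidef → A X = b →
          Matrix.trace (C * Xstar) ≤ Matrix.trace (C * X))) ∧
      (1 ≤ b ⬝ᵥ ystar ∧ ∀ y : Fin m → ℝ, 1 ≤ b ⬝ᵥ y →
        sdpPolar C (At ystar) ≤ sdpPolar C (At y)))
    ↔ (A Xstar = b ∧ Xstar.PosSemidef ∧ b ⬝ᵥ ystar = 1 ∧
        ∃ μ : ℝ, (μ : EReal) = sdpPolar C (At ystar) ∧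
          Matrix.trace ((μ • C - At ystar) * Xstar) = 0) := by
  change 0 < sdpPrimalValue C A b at hp
  change sdpPrimalValue C A b * gaugeDualValue C At b = 1 at hstrong
  obtain ⟨p, d, hpv, hdv, hpd⟩ := EReal.exists_coe_of_mul_eq_one hstrong
  rw [hpv, EReal.coe_pos] at hp
  constructor
  · rintro ⟨⟨hX, hAX, hXopt⟩, hy, hyopt⟩
    have gap := trace_smul_sub_mul_eq_of_adjoint (C := C) hadj hAX
    have htr : trace (C * Xstar) = p :=
      EReal.coe_eq_coe_iff.1 (((coe_trace_eq_sdpPrimalValue_iff hX hAX).2 hXopt).trans hpv)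
    have hμ : sdpPolar C (At ystar) = d := ((sdpPolar_eq_gaugeDualValue_iff hy).2 hyopt).trans hdv
    have hgap := (posSemidef_smul_sub_of_sdpPolar_eq hμ).trace_mul_nonneg hX
    rw [gap, htr] at hgap
    have hby : b ⬝ᵥ ystar = 1 := by linarith [mul_comm p d]
    refine ⟨hAX, hX, hby, d, hμ.symm, ?_⟩
    rw [gap, htr, hby]
    linarith [mul_comm p d]
  · rintro ⟨hAX, hX, hby, μ, hμ, hgap⟩
    rw [trace_smul_sub_mul_eq_of_adjoint hadj hAX, hby] at hgap
    have hμ0 : 0 ≤ μ := EReal.coe_nonneg.1 (hμ ▸ sdpPolar_nonneg _ _)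
    have hpt : p ≤ trace (C * Xstar) := EReal.coe_le_coe_iff.1 (hpv ▸ sdpPrimalValue_le hX hAX)
    have hdμ : d ≤ μ := EReal.coe_le_coe_iff.1 (hdv ▸ hμ ▸ gaugeDualValue_le hby.ge)
    have hμd : μ = d := by nlinarith
    have htr : trace (C * Xstar) = p := by
      linear_combination p * hgap - trace (C * Xstar) * hpd - p * trace (C * Xstar) * hμd
    refine ⟨⟨hX, hAX, (coe_trace_eq_sdpPrimalValue_iff hX hAX).1 ?_⟩, hby.ge,
      (sdpPolar_eq_gaugeDualValue_iff hby.ge).1 ?_⟩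
    · rw [htr, hpv]
    · rw [← hμ, hμd, hdv]

/-- Optimality conditions for standard-form SDP via gauge duality. Suppose the gauge dual
has an optimal solution, the primal optimal value p* is positive, and strong duality
p*·d* = 1 holds. Then X* and y* are primal-dual optimal iff 𝒜X* = b, X* ⪰ 0, bᵀy* = 1 and
⟨μ_{y*}C − 𝒜ᵀy*, X*⟩ = 0, where (μ_{y*} : EReal) = κ°(𝒜ᵀy*). -/
theorem sdp_gauge_optimality_conditions {n m : ℕ}
    (C : Matrix (Fin n) (Fin n) ℝ) (hC : C.PosSemidef)
    (A : Matrix (Fin n) (Fin n) ℝ →ₗ[ℝ] (Fin m → ℝ))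
    (At : (Fin m → ℝ) →ₗ[ℝ] Matrix (Fin n) (Fin n) ℝ)
    (hadj : ∀ (X : Matrix (Fin n) (Fin n) ℝ) (y : Fin m → ℝ),
      (A X) ⬝ᵥ y = Matrix.trace (At y * X))
    (b : Fin m → ℝ)
    (hdualopt : ∃ y : Fin m → ℝ, 1 ≤ b ⬝ᵥ y ∧
      ∀ y' : Fin m → ℝ, 1 ≤ b ⬝ᵥ y' → sdpPolar C (At y) ≤ sdpPolar C (At y'))
    (hp : 0 < sInf {t : EReal | ∃ X : Matrix (Fin n) (Fin n) ℝ,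
      X.PosSemidef ∧ A X = b ∧ t = ((Matrix.trace (C * X) : ℝ) : EReal)})
    (hstrong : sInf {t : EReal | ∃ X : Matrix (Fin n) (Fin n) ℝ,
        X.PosSemidef ∧ A X = b ∧ t = ((Matrix.trace (C * X) : ℝ) : EReal)} *
      sInf {t : EReal | ∃ y : Fin m → ℝ, 1 ≤ b ⬝ᵥ y ∧ t = sdpPolar C (At y)} = 1)
    (Xstar : Matrix (Fin n) (Fin n) ℝ) (ystar : Fin m → ℝ) :
    ((Xstar.PosSemidef ∧ A Xstar = b ∧
        (∀ X : Matrix (Fin n) (Fin n) ℝ, X.PosSemidef → A X = b →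
          Matrix.trace (C * Xstar) ≤ Matrix.trace (C * X))) ∧
      (1 ≤ b ⬝ᵥ ystar ∧ ∀ y : Fin m → ℝ, 1 ≤ b ⬝ᵥ y →
        sdpPolar C (At ystar) ≤ sdpPolar C (At y)))
    ↔ (A Xstar = b ∧ Xstar.PosSemidef ∧ b ⬝ᵥ ystar = 1 ∧
        ∃ μ : ℝ, (μ : EReal) = sdpPolar C (At ystar) ∧
          Matrix.trace ((μ • C - At ystar) * Xstar) = 0) :=
  sdp_gauge_optimality_conditions_general C A At hadj b hp hstrong Xstar ystar
end

section
/- SDP primal solution recovery: let y* be optimal for the gauge dual min{κ°(Aᵀy) : bᵀy ≥ 1} with μ_{y*} = κ°(Aᵀy*), and suppose the optimality conditions hold (AX* = b, X* ⪰ 0, bᵀy* = 1, ⟨μ_{y*}C − Aᵀy*, X*⟩ = 0 with μ_{y*}C − Aᵀy* ⪰ 0). If U₂ ∈ ℝ^{n×r} is an orthonormal basis of the null space of μ_{y*}C − Aᵀy*, then X* = U₂ T U₂ᵀ for some symmetric positive semidefinite matrix T of order r. -/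
/-!
Complementary slackness forces `S * X = 0`: writing `S = Pᴴ P` and `X = Qᴴ Q`, the trace
`tr (S X)` is the squared Frobenius norm of `P Qᴴ`. Hence every column of `X` lies in
`ker S = range U₂`, so `X = U₂ U₂ᴴ X U₂ U₂ᴴ`, and `T = U₂ᴴ X U₂` is positive semidefinite.
-/

open Matrix

open scoped MatrixOrder ComplexOrder

namespace Matrix

section

variable {l m n R : Type*} [NonUnitalNonAssocSemiring R]

theorem mulVec_transpose_eq_zero_of_mul_eq_zero [Fintype m] {S : Matrix l m R}
    {X : Matrix m n R} (h : S * X = 0) (j : n) : S *ᵥ Xᵀ j = 0 := by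
  ext i
  simpa [mul_apply, mulVec, dotProduct] using congrFun (congrFun h i) j

theorem exists_eq_mul_of_forall_exists_mulVec_eq {k : Type*} [Fintype k] {X : Matrix m n R}
    {U : Matrix m k R} (h : ∀ j, ∃ w, U *ᵥ w = Xᵀ j) : ∃ W, X = U * W := by
  choose w hw using h
  exact ⟨(of w)ᵀ, by ext i j; exact (congrFun (hw j) i).symm⟩

end

variable {n r 𝕜 : Type*} [Fintype n] [Fintype r] [DecidableEq r] [RCLike 𝕜]

theorem PosSemidef.trace_mul_eq_zero_iff {S X : Matrix n n 𝕜} (hS : S.PosSemidef)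
    (hX : X.PosSemidef) : (S * X).trace = 0 ↔ S * X = 0 := by
  classical
  refine ⟨fun h => ?_, fun h => by rw [h, trace_zero]⟩
  obtain ⟨P, rfl⟩ := CStarAlgebra.nonneg_iff_eq_star_mul_self.mp hS.nonneg
  obtain ⟨Q, rfl⟩ := CStarAlgebra.nonneg_iff_eq_star_mul_self.mp hX.nonneg
  simp only [star_eq_conjTranspose] at h ⊢
  have hPQ : P * Qᴴ = 0 := by
    rw [← trace_conjTranspose_mul_self_eq_zero_iff, ← h, conjTranspose_mul,
      conjTranspose_conjTranspose, mul_assoc, trace_mul_comm]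
    simp only [mul_assoc]
  rw [mul_assoc, ← mul_assoc P, hPQ, zero_mul, mul_zero]

theorem IsHermitian.eq_mul_mul_conjTranspose {X : Matrix n n 𝕜} {U : Matrix n r 𝕜}
    {W : Matrix r n 𝕜} (hX : X.IsHermitian) (hU : Uᴴ * U = 1) (hXU : X = U * W) :
    X = U * (Uᴴ * X * U) * Uᴴ := by
  have hleft : U * Uᴴ * X = X := by
    rw [hXU, Matrix.mul_assoc, ← Matrix.mul_assoc Uᴴ, hU, Matrix.one_mul]
  have hright : X * (U * Uᴴ) = X := by
    simpa [conjTranspose_mul, hX.eq, mul_assoc] using congrArg (·ᴴ) hleft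
  calc X = U * Uᴴ * X * (U * Uᴴ) := by rw [Matrix.mul_assoc, hright, hleft]
    _ = U * (Uᴴ * X * U) * Uᴴ := by simp only [Matrix.mul_assoc]

theorem PosSemidef.exists_eq_mul_mul_conjTranspose_of_trace_mul_eq_zero
    {S X : Matrix n n 𝕜} {U : Matrix n r 𝕜} (hS : S.PosSemidef) (hX : X.PosSemidef)
    (hSX : (S * X).trace = 0) (hU : Uᴴ * U = 1) (hker : ∀ v, S *ᵥ v = 0 → ∃ w, U *ᵥ w = v) :
    ∃ T : Matrix r r 𝕜, T.PosSemidef ∧ X = U * T * Uᴴ := by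
  have hcols : ∀ j, S *ᵥ Xᵀ j = 0 :=
    mulVec_transpose_eq_zero_of_mul_eq_zero ((hS.trace_mul_eq_zero_iff hX).mp hSX)
  obtain ⟨W, hW⟩ := exists_eq_mul_of_forall_exists_mulVec_eq fun j => hker _ (hcols j)
  exact ⟨_, hX.conjTranspose_mul_mul_same U, hX.isHermitian.eq_mul_mul_conjTranspose hU hW⟩

end Matrix

theorem sdp_primal_recovery_general {n m r : ℕ}
    (C : Matrix (Fin n) (Fin n) ℝ)
    (At : (Fin m → ℝ) →ₗ[ℝ] Matrix (Fin n) (Fin n) ℝ)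
    (ystar : Fin m → ℝ)
    (μ : ℝ)
    (hS : (μ • C - At ystar).PosSemidef)
    (Xstar : Matrix (Fin n) (Fin n) ℝ)
    (hpsd : Xstar.PosSemidef)
    (hcomp : Matrix.trace ((μ • C - At ystar) * Xstar) = 0)
    (U₂ : Matrix (Fin n) (Fin r) ℝ)
    (horth : U₂ᵀ * U₂ = 1)
    (hspan : ∀ v : Fin n → ℝ, (μ • C - At ystar).mulVec v = 0 ↔ ∃ w : Fin r → ℝ,
      U₂.mulVec w = v) :
    ∃ T : Matrix (Fin r) (Fin r) ℝ, T.PosSemidef ∧ Xstar = U₂ * T * U₂ᵀ := by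
  have horth' : U₂ᴴ * U₂ = 1 := by rwa [conjTranspose_eq_transpose_of_trivial]
  simpa only [conjTranspose_eq_transpose_of_trivial] using
    hS.exists_eq_mul_mul_conjTranspose_of_trace_mul_eq_zero hpsd hcomp horth'
      fun v => (hspan v).mp

/-- SDP primal solution recovery: if y* is gauge-dual optimal and the optimality conditions
hold, and U₂ is an orthonormal basis of the null space of μ_{y*}C − 𝒜ᵀy*, then
X* = U₂ T U₂ᵀ for some symmetric PSD matrix T of order r. -/
theorem sdp_primal_recovery {n m r : ℕ}
    (C : Matrix (Fin n) (Fin n) ℝ) (hC : C.PosSemidef)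
    (A : Matrix (Fin n) (Fin n) ℝ →ₗ[ℝ] (Fin m → ℝ))
    (At : (Fin m → ℝ) →ₗ[ℝ] Matrix (Fin n) (Fin n) ℝ)
    (hadj : ∀ (X : Matrix (Fin n) (Fin n) ℝ) (y : Fin m → ℝ),
      (A X) ⬝ᵥ y = Matrix.trace (At y * X))
    (b : Fin m → ℝ) (ystar : Fin m → ℝ)
    (hystar : 1 ≤ b ⬝ᵥ ystar ∧
      ∀ y : Fin m → ℝ, 1 ≤ b ⬝ᵥ y → sdpPolar C (At ystar) ≤ sdpPolar C (At y))
    (μ : ℝ) (hμ : (μ : EReal) = sdpPolar C (At ystar))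
    (hS : (μ • C - At ystar).PosSemidef)
    (Xstar : Matrix (Fin n) (Fin n) ℝ)
    (hfeas : A Xstar = b) (hpsd : Xstar.PosSemidef)
    (hby : b ⬝ᵥ ystar = 1)
    (hcomp : Matrix.trace ((μ • C - At ystar) * Xstar) = 0)
    (U₂ : Matrix (Fin n) (Fin r) ℝ)
    (horth : U₂ᵀ * U₂ = 1)
    (hspan : ∀ v : Fin n → ℝ, (μ • C - At ystar).mulVec v = 0 ↔ ∃ w : Fin r → ℝ,
      U₂.mulVec w = v) :
    ∃ T : Matrix (Fin r) (Fin r) ℝ, T.PosSemidef ∧ Xstar = U₂ * T * U₂ᵀ :=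
  sdp_primal_recovery_general C At ystar μ hS Xstar hpsd hcomp U₂ horth hspan
end
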